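/- arXiv:1304.0172 — 3 statements merged into one kernel-verified Lean document; each statement's English description precedes it below -/
import Mathlib

section
/- For a prime p, n ∈ ℕ with base-p digits n_σ, and i ≥ 1, the number of j ∈ {0,...,n} such that C(n,j) ≡ 0 mod p and the pair (n,j) lies in class ī equals Φ(i,n) = (p^i − 1 − Σ_{μ=0}^{i-1} n_μ p^μ) · n_i · Π_{σ=i+1}^∞ (n_σ + 1). -/
/-- The σ-th digit of `x` in base `p`. -/
def digit (p x σ : ℕ) : ℕ := x / p ^ σ % p

/-- For a pair `(n,j)` with `p ∣ C(n,j)`, the class index `i` of `(n,j)`: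
with `L := max {σ | j_σ > n_σ}`, it is `i := min {σ | σ > L ∧ j_σ < n_σ}`. -/
noncomputable def classIdx (p n j : ℕ) : ℕ :=
  sInf {σ : ℕ | σ > sSup {τ : ℕ | digit p n τ < digit p j τ} ∧ digit p j σ < digit p n σ}

/-!
By Lucas' theorem, `p ∣ C(n, j)` iff some base-`p` digit of `j` exceeds that of `n`. For `j ≤ n`
the pair `(n, j)` then lies in class `ī` exactly when `j mod pⁱ > n mod pⁱ` (the top digit below `i`
where `j` and `n` differ is `L`, where `j` wins), `j_i < n_i`, and `j_σ ≤ n_σ` for every `σ > i`.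
These conditions constrain `j mod pⁱ`, the digit `j_i` and `j / pⁱ⁺¹` independently, leaving
`pⁱ − 1 − (n mod pⁱ)`, `n_i` and `∏_{σ>i} (n_σ + 1)` choices respectively.
-/

namespace Nat

lemma add_mul_lt_add_mul_iff {P a b u v : ℕ} (ha : a < P) (hb : b < P) :
    a + P * u < b + P * v ↔ u < v ∨ u = v ∧ a < b := by
  rcases lt_trichotomy u v with huv | rfl | hvu
  · have := Nat.mul_le_mul_left P (show u + 1 ≤ v from huv)
    rw [mul_add, mul_one] at this
    simp only [huv, true_or, iff_true]
    omega
  · simp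
  · have := Nat.mul_le_mul_left P (show v + 1 ≤ u from hvu)
    rw [mul_add, mul_one] at this
    simp only [hvu.not_gt, hvu.ne', false_and, or_self, iff_false]
    omega

lemma lt_pow_of_le {p x K : ℕ} (hp : 1 < p) (h : x ≤ K) : x < p ^ K :=
  (Nat.lt_pow_self hp).trans_le (Nat.pow_le_pow_right (by omega) h)

end Nat

section

variable {p : ℕ}

lemma digit_lt (hp : 0 < p) (x σ : ℕ) : digit p x σ < p := Nat.mod_lt _ hp

lemma digit_zero (x : ℕ) : digit p x 0 = x % p := by simp [digit]

lemma digit_div_pow (x t σ : ℕ) : digit p (x / p ^ t) σ = digit p x (t + σ) := by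
  simp [digit, Nat.div_div_eq_div_mul, ← pow_add]

lemma digit_succ (x σ : ℕ) : digit p x (σ + 1) = digit p (x / p) σ := by
  simpa [add_comm] using (digit_div_pow (p := p) x 1 σ).symm

lemma lt_of_digit_ne_zero (hp : 1 < p) {x σ : ℕ} (h : digit p x σ ≠ 0) : σ < x := by
  have hσ : p ^ σ ≤ x := by
    by_contra hx
    exact h (by simp [digit, Nat.div_eq_of_lt (not_le.1 hx)])
  exact (Nat.lt_pow_self hp).trans_le hσ

lemma sum_digit_mul_pow (x i : ℕ) : ∑ μ ∈ Finset.range i, digit p x μ * p ^ μ = x % p ^ i := by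
  induction i with
  | zero => simp [Nat.mod_one]
  | succ i ih => rw [Finset.sum_range_succ, ih, Nat.mod_pow_succ, mul_comm (p ^ i)]; rfl

lemma mod_pow_lt_mod_pow_iff (hp : 0 < p) {x y : ℕ} (i : ℕ) :
    x % p ^ i < y % p ^ i ↔ ∃ τ < i, digit p x τ < digit p y τ ∧
      ∀ σ, τ < σ → σ < i → digit p x σ = digit p y σ := by
  induction i with
  | zero => simp [Nat.mod_one]
  | succ i ih =>
    rw [Nat.mod_pow_succ, Nat.mod_pow_succ,
      Nat.add_mul_lt_add_mul_iff (Nat.mod_lt _ (by positivity)) (Nat.mod_lt _ (by positivity))]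
    change digit p x i < digit p y i ∨ digit p x i = digit p y i ∧ _ ↔ _
    constructor
    · rintro (hi | ⟨hi, hlow⟩)
      · exact ⟨i, i.lt_succ_self, hi, fun σ h₁ h₂ => absurd h₂ (by omega)⟩
      · obtain ⟨τ, hτ, hlt, hmid⟩ := ih.1 hlow
        refine ⟨τ, by omega, hlt, fun σ h₁ h₂ => ?_⟩
        rcases Nat.lt_succ_iff_lt_or_eq.1 h₂ with h₂ | rfl
        exacts [hmid σ h₁ h₂, hi]
    · rintro ⟨τ, hτ, hlt, hmid⟩
      rcases Nat.lt_succ_iff_lt_or_eq.1 hτ with hτ | rfl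
      · exact .inr ⟨hmid i hτ i.lt_succ_self,
          ih.2 ⟨τ, hτ, hlt, fun σ h₁ h₂ => hmid σ h₁ (by omega)⟩⟩
      · exact .inl hlt

lemma le_of_forall_digit_le (hp : 1 < p) {x y : ℕ} (h : ∀ σ, digit p x σ ≤ digit p y σ) :
    x ≤ y := by
  calc x = x % p ^ (x + y) :=
        (Nat.mod_eq_of_lt (Nat.lt_pow_of_le hp (Nat.le_add_right x y))).symm
    _ = ∑ σ ∈ Finset.range (x + y), digit p x σ * p ^ σ := (sum_digit_mul_pow x _).symm
    _ ≤ ∑ σ ∈ Finset.range (x + y), digit p y σ * p ^ σ :=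
      Finset.sum_le_sum fun σ _ => Nat.mul_le_mul_right _ (h σ)
    _ = y % p ^ (x + y) := sum_digit_mul_pow y _
    _ = y := Nat.mod_eq_of_lt (Nat.lt_pow_of_le hp (Nat.le_add_left y x))

lemma lt_of_digit_lt_of_forall_digit_le (hp : 1 < p) {x y τ : ℕ}
    (hτ : digit p x τ < digit p y τ) (h : ∀ σ, τ < σ → digit p x σ ≤ digit p y σ) : x < y := by
  have hlow : x % p ^ (τ + 1) < y % p ^ (τ + 1) :=
    (mod_pow_lt_mod_pow_iff (by omega) _).2 ⟨τ, τ.lt_succ_self, hτ, fun σ h₁ h₂ => by omega⟩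
  have hhigh : x / p ^ (τ + 1) ≤ y / p ^ (τ + 1) :=
    le_of_forall_digit_le hp fun σ => by
      rw [digit_div_pow, digit_div_pow]
      exact h _ (by omega)
  have := Nat.mul_le_mul_left (p ^ (τ + 1)) hhigh
  have := Nat.mod_add_div x (p ^ (τ + 1))
  have := Nat.mod_add_div y (p ^ (τ + 1))
  omega

lemma Nat.Prime.dvd_choose_iff_lt (hp : p.Prime) {a b : ℕ} (ha : a < p) :
    p ∣ a.choose b ↔ a < b := by
  refine ⟨fun h => not_le.1 fun hba => ?_, fun h => by simp [Nat.choose_eq_zero_of_lt h]⟩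
  exact (Nat.Prime.coprime_iff_not_dvd hp).1 (hp.coprime_choose_of_lt ha hba) h

lemma dvd_choose_iff_exists_digit_lt (hp : p.Prime) {n j : ℕ} :
    p ∣ n.choose j ↔ ∃ τ, digit p n τ < digit p j τ := by
  have : Fact p.Prime := ⟨hp⟩
  have hlucas := Choose.choose_modEq_prod_range_choose_nat (p := p)
    (Nat.lt_pow_of_le hp.one_lt (Nat.le_add_right n j))
    (Nat.lt_pow_of_le hp.one_lt (Nat.le_add_left j n))
  rw [hlucas.dvd_iff dvd_rfl, hp.prime.dvd_finsetProd_iff]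
  simp only [Finset.mem_range]
  refine ⟨fun ⟨τ, _, h⟩ => ⟨τ, (hp.dvd_choose_iff_lt (digit_lt hp.pos n τ)).1 h⟩,
    fun ⟨τ, h⟩ => ⟨τ, ?_, (hp.dvd_choose_iff_lt (digit_lt hp.pos n τ)).2 h⟩⟩
  have := lt_of_digit_ne_zero hp.one_lt (x := j) (σ := τ) (by omega)
  omega

lemma classIdx_iff (hp : p.Prime) {n j i : ℕ} (hj : j ≤ n) :
    (p ∣ n.choose j ∧ classIdx p n j = i) ↔
      n % p ^ i < j % p ^ i ∧ digit p j i < digit p n i ∧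
        ∀ σ, i < σ → digit p j σ ≤ digit p n σ := by
  have hbdd : BddAbove {τ | digit p n τ < digit p j τ} :=
    ⟨j, fun τ hτ => (lt_of_digit_ne_zero hp.one_lt (x := j) (by simp at hτ; omega)).le⟩
  constructor
  · rintro ⟨hdvd, rfl⟩
    set L := sSup {τ | digit p n τ < digit p j τ}
    have hL : digit p n L < digit p j L :=
      Nat.sSup_mem ((dvd_choose_iff_exists_digit_lt hp).1 hdvd) hbdd
    have hLmax : ∀ σ, L < σ → digit p j σ ≤ digit p n σ :=
      fun σ hσ => not_lt.1 fun h => (not_le.2 hσ) (le_csSup hbdd h)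
    have hne : {σ | σ > L ∧ digit p j σ < digit p n σ}.Nonempty := by
      by_contra hempty
      refine (lt_of_digit_lt_of_forall_digit_le hp.one_lt hL fun σ hσ => ?_).not_ge hj
      exact not_lt.1 fun h => hempty ⟨σ, hσ, h⟩
    obtain ⟨hLi, hi⟩ := Nat.sInf_mem hne
    refine ⟨(mod_pow_lt_mod_pow_iff hp.pos _).2 ⟨L, hLi, hL, fun σ h₁ h₂ => ?_⟩, hi,
      fun σ hσ => hLmax σ (hLi.trans hσ)⟩
    have := Nat.notMem_of_lt_sInf h₂
    simp only [Set.mem_ofPred_eq, not_and, not_lt] at this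
    exact le_antisymm (this h₁) (hLmax σ h₁)
  · rintro ⟨hmod, hi, hup⟩
    obtain ⟨τ, hτi, hτ, hmid⟩ := (mod_pow_lt_mod_pow_iff hp.pos _).1 hmod
    have hL : IsGreatest {τ | digit p n τ < digit p j τ} τ := by
      refine ⟨hτ, fun σ (hσ : digit p n σ < digit p j σ) => not_lt.1 fun hτσ => ?_⟩
      rcases lt_trichotomy σ i with hσi | rfl | hiσ
      · exact hσ.ne (hmid σ hτσ hσi)
      · omega
      · exact (hup σ hiσ).not_gt hσ
    refine ⟨(dvd_choose_iff_exists_digit_lt hp).2 ⟨τ, hτ⟩, ?_⟩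
    rw [classIdx, hL.csSup_eq]
    refine IsLeast.csInf_eq ⟨⟨hτi, hi⟩, fun σ ⟨hτσ, hσ⟩ => not_lt.1 fun hσi => ?_⟩
    exact hσ.ne' (hmid σ hτσ hσi)

lemma ncard_mod_div {m : ℕ} (hm : 0 < m) (P Q : ℕ → Prop) :
    {x | P (x % m) ∧ Q (x / m)}.ncard = {a | a < m ∧ P a}.ncard * {q | Q q}.ncard := by
  rw [← Set.ncard_prod]
  refine Set.ncard_congr (fun x _ => (x % m, x / m)) (fun x hx => ⟨⟨Nat.mod_lt x hm, hx.1⟩, hx.2⟩)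
    (fun x y _ _ h => ?_) fun ⟨a, q⟩ ⟨⟨ham, ha⟩, (hq : Q q)⟩ => ⟨a + m * q, ?_, ?_⟩
  · simp only [Prod.mk.injEq] at h
    rw [← Nat.mod_add_div x m, ← Nat.mod_add_div y m, h.1, h.2]
  all_goals simp [Nat.add_mul_mod_self_left, Nat.add_mul_div_left _ _ hm, Nat.mod_eq_of_lt ham,
    Nat.div_eq_of_lt ham, ha, hq]

lemma ncard_forall_digit_le (hp : 1 < p) {K N : ℕ} (hN : N < p ^ K) :
    {c | ∀ σ, digit p c σ ≤ digit p N σ}.ncard = ∏ σ ∈ Finset.range K, (digit p N σ + 1) := by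
  induction K generalizing N with
  | zero =>
    obtain rfl : N = 0 := by simpa using hN
    have : {c | ∀ σ, digit p c σ ≤ digit p 0 σ} = {0} :=
      Set.eq_singleton_iff_unique_mem.2
        ⟨fun σ => le_rfl, fun c hc => Nat.le_zero.1 (le_of_forall_digit_le hp hc)⟩
    simp [this]
  | succ K ih =>
    have hsplit : {c | ∀ σ, digit p c σ ≤ digit p N σ} =
        {c | c % p ≤ N % p ∧ ∀ σ, digit p (c / p) σ ≤ digit p (N / p) σ} := by
      ext c
      simp only [Set.mem_ofPred_eq, ← digit_zero, ← digit_succ]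
      exact ⟨fun h => ⟨h 0, fun σ => h (σ + 1)⟩, fun h σ => by cases σ <;> simp [h.1, h.2]⟩
    have hlow : {a | a < p ∧ a ≤ N % p} = Set.Iic (N % p) :=
      Set.ext fun a => ⟨And.right, fun ha => ⟨ha.trans_lt (Nat.mod_lt N (by omega)), ha⟩⟩
    rw [hsplit,
      ncard_mod_div (by omega) (· ≤ N % p) (fun q => ∀ σ, digit p q σ ≤ digit p (N / p) σ), hlow,
      Set.ncard_Iic_nat, ih (Nat.div_lt_of_lt_mul (by rwa [← pow_succ'])),
      Finset.prod_range_succ', mul_comm]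
    simp only [digit_succ, digit_zero]

lemma ncard_class (hp : 1 < p) (n i : ℕ) :
    {j | n % p ^ i < j % p ^ i ∧ digit p j i < digit p n i ∧
        ∀ σ, i < σ → digit p j σ ≤ digit p n σ}.ncard =
      (p ^ i - 1 - n % p ^ i) * digit p n i *
        ∏ σ ∈ Finset.Ico (i + 1) (n + 1), (digit p n σ + 1) := by
  have hsplit : {j | n % p ^ i < j % p ^ i ∧ digit p j i < digit p n i ∧
        ∀ σ, i < σ → digit p j σ ≤ digit p n σ} =
      {j | n % p ^ i < j % p ^ i ∧ (j / p ^ i % p < n / p ^ i % p ∧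
        ∀ σ, digit p (j / p ^ i / p) σ ≤ digit p (n / p ^ i / p) σ)} := by
    ext j
    simp only [Set.mem_ofPred_eq, ← digit_zero, ← digit_succ, digit_div_pow, add_zero]
    refine and_congr_right' (and_congr_right' ⟨fun h σ => h _ (by omega), fun h σ hσ => ?_⟩)
    obtain ⟨k, rfl⟩ := Nat.exists_eq_add_of_lt hσ
    simpa only [add_assoc] using h k
  have hhigh : n / p ^ i / p < p ^ (n + 1 - (i + 1)) := by
    rw [Nat.div_div_eq_div_mul, ← pow_succ, Nat.div_lt_iff_lt_mul (by positivity), ← pow_add]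
    exact Nat.lt_pow_of_le hp (by omega)
  have hlow : {a | a < p ^ i ∧ n % p ^ i < a} = Set.Ioo (n % p ^ i) (p ^ i) :=
    Set.ext fun a => and_comm
  have hmid : {a | a < p ∧ a < n / p ^ i % p} = Set.Iio (digit p n i) :=
    Set.ext fun a => ⟨And.right, fun ha => ⟨ha.trans (digit_lt (by omega) n i), ha⟩⟩
  rw [hsplit, ncard_mod_div (by positivity) (n % p ^ i < ·)
      (fun q => q % p < n / p ^ i % p ∧ ∀ σ, digit p (q / p) σ ≤ digit p (n / p ^ i / p) σ),
    ncard_mod_div (by omega) (· < n / p ^ i % p)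
      (fun q => ∀ σ, digit p q σ ≤ digit p (n / p ^ i / p) σ),
    hlow, hmid, Set.ncard_Ioo_nat, Set.ncard_Iio_nat, ncard_forall_digit_le hp hhigh,
    Finset.prod_Ico_eq_prod_range, Nat.sub_right_comm, mul_assoc]
  simp only [Nat.div_div_eq_div_mul, ← pow_succ, digit_div_pow]

end

/-- Digits of `n` with index `σ > n` vanish, so the product over `i+1 ≤ σ < n+1` is the full
infinite product. -/
theorem card_class_eq_Phi_general (p : ℕ) (hp : p.Prime) (n i : ℕ) :
    (((Finset.range (n + 1)).filter fun j =>
        p ∣ Nat.choose n j ∧ classIdx p n j = i).card)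
      = (p ^ i - 1 - ∑ μ ∈ Finset.range i, digit p n μ * p ^ μ) * digit p n i *
          ∏ σ ∈ Finset.Ico (i + 1) (n + 1), (digit p n σ + 1) := by
  rw [sum_digit_mul_pow, ← ncard_class hp.one_lt, ← Set.ncard_coe_finset, Finset.coe_filter]
  congr 1
  ext j
  simp only [Finset.mem_range, Set.mem_ofPred_eq]
  refine ⟨fun ⟨hj, h⟩ => (classIdx_iff hp (by omega)).1 h, fun h => ?_⟩
  have hjn : j < n := lt_of_digit_lt_of_forall_digit_le hp.one_lt h.2.1 h.2.2
  exact ⟨by omega, (classIdx_iff hp hjn.le).2 h⟩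

/-- The number of `j ∈ {0,…,n}` with `p ∣ C(n,j)` and `(n,j)` in class `ī` equals
`Φ(i,n) = (pⁱ − 1 − Σ_{μ<i} n_μ p^μ) · n_i · ∏_{σ>i} (n_σ + 1)`.
(Digits of `n` with index `σ > n` vanish, so the product over `i+1 ≤ σ < n+1` is
the full infinite product.) -/
theorem card_class_eq_Phi (p : ℕ) (hp : p.Prime) (n i : ℕ) (hi : 1 ≤ i) :
    (((Finset.range (n + 1)).filter fun j =>
        p ∣ Nat.choose n j ∧ classIdx p n j = i).card)
      = (p ^ i - 1 - ∑ μ ∈ Finset.range i, digit p n μ * p ^ μ) * digit p n i *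
          ∏ σ ∈ Finset.Ico (i + 1) (n + 1), (digit p n σ + 1) :=
  card_class_eq_Phi_general p hp n i
end

section
/- Timmermann's formula: Let F be a field of characteristic p > 0 with #F ≥ n, and n ≥ 2 with base-p digits n_σ. The (n−1)-nucleus of the normal rational curve V_1^n (the intersection of all osculating hyperplanes) has projective dimension n − Π_{σ=0}^∞ (n_σ + 1). -/
/-- The `k`-osculating subspace (here parametrized by `c = k+1`, the number of spanning
columns) of the normal rational curve `x ↦ (1, x, …, xⁿ)` in `F^{n+1}` at the point with
parameter `u`: the span of the first `c` columns of the matrix with entries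
`C(r,s) u^{r−s}` (`0 ≤ s ≤ r ≤ n`), i.e. of the point and its first `c-1`
Hasse-derivative points. -/
def oscSub (F : Type) [Field F] (n : ℕ) (u : F) (c : ℕ) : Submodule F (Fin (n + 1) → F) :=
  Submodule.span F
    (Set.range fun s : Fin c => fun r : Fin (n + 1) => (r.1.choose s.1 : F) * u ^ (r.1 - s.1))

/-- The `k`-osculating subspace (with `c = k+1`) at the point `u = ∞` of the curve:
the span of the last `c` standard basis vectors `e_n, …, e_{n-c+1}`. -/
def oscInfty (F : Type) [Field F] (n c : ℕ) : Submodule F (Fin (n + 1) → F) :=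
  Submodule.span F {v | ∃ i : Fin (n + 1), n + 1 ≤ i.1 + c ∧ v = Pi.single i 1}

/-- The `k`-nucleus (with `c = k+1`) of the normal rational curve: the intersection of
all its `k`-osculating subspaces. -/
def nucleus (F : Type) [Field F] (n c : ℕ) : Submodule F (Fin (n + 1) → F) :=
  (⨅ u : F, oscSub F n u c) ⊓ oscInfty F n c

/-!
Row `r` of the matrix `(C(r,s) u^(r-s))` holds the coefficients of `(X + u)^r`, so these matrices
form a one-parameter group, and the osculating hyperplane at `u` is the kernel of the last row of
the inverse matrix, `x ↦ ∑ₜ C(n,t) (-u)^(n-t) xₜ`. For `x` in the hyperplane at `∞` (`x₀ = 0`)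
this is a polynomial in `u` of degree `< n ≤ #F`, so `x` lies in every osculating hyperplane iff
`C(n,t) xₜ = 0` for all `t`. The nucleus is therefore the coordinate subspace on the indices with
`p ∣ C(n,t)`, and by Lucas's theorem exactly `∏ (n_σ + 1)` of the `C(n,t)` are prime to `p`.
-/

open Finset Polynomial Matrix

theorem mem_filter_not_dvd_choose {p n k : ℕ} :
    k ∈ {k ∈ range (n + 1) | ¬ p ∣ n.choose k} ↔ ¬ p ∣ n.choose k := by
  refine ⟨fun h => (mem_filter.1 h).2, fun h => mem_filter.2 ⟨mem_range.2 ?_, h⟩⟩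
  by_contra hk
  exact h (by simp [Nat.choose_eq_zero_of_lt (by omega : n < k)])

section Lucas

variable {p : ℕ} [hp : Fact p.Prime]

theorem not_dvd_choose_iff (n k : ℕ) :
    ¬ p ∣ n.choose k ↔ k % p ≤ n % p ∧ ¬ p ∣ (n / p).choose (k / p) := by
  have hmod : p ∣ (n % p).choose (k % p) ↔ n % p < k % p := by
    refine ⟨fun h => not_le.1 fun hle => ?_, fun h => by simp [Nat.choose_eq_zero_of_lt h]⟩
    exact (Nat.Prime.coprime_iff_not_dvd hp.out).1
      (hp.out.coprime_choose_of_lt (Nat.mod_lt n hp.out.pos) hle) h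
  rw [(Choose.choose_modEq_choose_mod_mul_choose_div_nat).dvd_iff dvd_rfl, hp.out.dvd_mul, hmod]
  omega

theorem card_filter_not_dvd_choose (n : ℕ) :
    #{k ∈ range (n + 1) | ¬ p ∣ n.choose k}
      = (n % p + 1) * #{k ∈ range (n / p + 1) | ¬ p ∣ (n / p).choose k} := by
  have hnp := Nat.mod_lt n hp.out.pos
  have mul_add_mod_div {r q : ℕ} (hr : r < n % p + 1) :
      (p * q + r) % p = r ∧ (p * q + r) / p = q :=
    have hr : r < p := by omega
    ⟨by simp [Nat.mod_eq_of_lt hr], by simp [Nat.mul_add_div hp.out.pos, Nat.div_eq_of_lt hr]⟩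
  rw [← card_range (n % p + 1), ← card_product]
  refine card_nbij' (fun k => (k % p, k / p)) (fun rq => p * rq.2 + rq.1) ?_ ?_ ?_ ?_
  · intro k hk
    dsimp only
    rw [mem_coe, mem_filter_not_dvd_choose, not_dvd_choose_iff] at hk
    rw [mem_coe, mem_product, mem_range, mem_filter_not_dvd_choose]
    exact ⟨by omega, hk.2⟩
  · rintro ⟨r, q⟩ hrq
    rw [mem_coe, mem_product, mem_range, mem_filter_not_dvd_choose] at hrq
    obtain ⟨hmod, hdiv⟩ := mul_add_mod_div hrq.1
    dsimp only
    rw [mem_coe, mem_filter_not_dvd_choose, not_dvd_choose_iff, hmod, hdiv]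
    exact ⟨by omega, hrq.2⟩
  · intro k _
    exact Nat.div_add_mod k p
  · rintro ⟨r, q⟩ hrq
    rw [mem_coe, mem_product, mem_range] at hrq
    obtain ⟨hmod, hdiv⟩ := mul_add_mod_div (q := q) hrq.1
    exact Prod.ext hmod hdiv

theorem card_filter_not_dvd_choose_eq_prod_digit {L n : ℕ} (hn : n < p ^ L) :
    #{k ∈ range (n + 1) | ¬ p ∣ n.choose k} = ∏ σ ∈ range L, (digit p n σ + 1) := by
  induction L generalizing n with
  | zero =>
    obtain rfl : n = 0 := by simpa using hn
    simp [filter_singleton, hp.out.ne_one]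
  | succ L ih =>
    have hdiv : n / p < p ^ L := Nat.div_lt_of_lt_mul (by rwa [← pow_succ'])
    rw [card_filter_not_dvd_choose, ih hdiv, prod_range_succ', mul_comm]
    simp [digit, Nat.div_div_eq_div_mul, pow_succ']

end Lucas

section Polynomial

open Cardinal

variable {R : Type*} [CommRing R] [IsDomain R]

theorem Polynomial.eq_zero_of_forall_eval_zero_of_coeff_eq_zero {Q : R[X]}
    {n : ℕ} (hdeg : Q.natDegree ≤ n) (hcoeff : Q.coeff n = 0) (hR : (n : Cardinal) ≤ #R)
    (heval : ∀ u, Q.eval u = 0) : Q = 0 := by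
  by_contra hQ
  have hlt : Q.natDegree < n :=
    hdeg.lt_of_ne fun h => hQ (leadingCoeff_eq_zero.1 (by rwa [leadingCoeff, h]))
  exact hQ (eq_zero_of_forall_eval_zero_of_natDegree_lt_card Q heval
    ((Nat.cast_lt.2 hlt).trans_le hR))

theorem forall_sum_mul_pow_eq_zero_iff {n : ℕ} (hR : (n : Cardinal) ≤ #R)
    {a : Fin (n + 1) → R} (ha : a 0 = 0) :
    (∀ u : R, ∑ t, a t * u ^ (n - t.1) = 0) ↔ ∀ t, a t = 0 := by
  refine ⟨fun h => ?_, fun h u => by simp [h]⟩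
  let Q : R[X] := ∑ t, monomial (n - t.1) (a t)
  have hcoeff (t : Fin (n + 1)) : Q.coeff (n - t.1) = a t := by
    rw [finsetSum_coeff, sum_eq_single t]
    · simp
    · intro t' _ ht'
      rw [coeff_monomial, if_neg]
      omega
    · simp
  have hQ : Q = 0 := by
    refine eq_zero_of_forall_eval_zero_of_coeff_eq_zero (n := n) ?_ ?_ hR ?_
    · exact natDegree_sum_le_of_forall_le _ _ fun t _ => (natDegree_monomial_le _).trans (by omega)
    · simpa [ha] using hcoeff 0
    · simpa [Q, eval_finsetSum] using h
  intro t
  rw [← hcoeff t, hQ, coeff_zero]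

end Polynomial

theorem mem_span_single_one_iff {R ι : Type*} [Semiring R] [Fintype ι] [DecidableEq ι]
    {P : ι → Prop} {x : ι → R} :
    x ∈ Submodule.span R {v | ∃ i, P i ∧ v = Pi.single i 1} ↔ ∀ i, ¬ P i → x i = 0 := by
  constructor
  · intro hx i hi
    induction hx using Submodule.span_induction with
    | mem v hv =>
      obtain ⟨j, hj, rfl⟩ := hv
      exact Pi.single_eq_of_ne (by rintro rfl; exact hi hj) 1
    | zero => rfl
    | add v w _ _ hv hw => simp [hv, hw]
    | smul a v _ hv => simp [hv]
  · intro h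
    rw [← Finset.univ_sum_single x]
    refine Submodule.sum_mem _ fun i _ => ?_
    by_cases hi : P i
    · rw [← mul_one (x i), ← smul_eq_mul, Pi.single_smul]
      exact Submodule.smul_mem _ _ (Submodule.subset_span ⟨i, hi, rfl⟩)
    · simp [h i hi]

theorem finrank_iInf_ker_proj {R ι : Type*} [Ring R] [StrongRankCondition R] [Fintype ι]
    (J : Set ι) :
    Module.finrank R (⨅ i ∈ J, LinearMap.ker (LinearMap.proj i : (ι → R) →ₗ[R] R) :
      Submodule R (ι → R)) = Nat.card ↥Jᶜ := by
  classical
  rw [(LinearMap.iInfKerProjEquiv R (fun _ => R) disjoint_compl_left (by simp)).finrank_eq,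
    Module.finrank_fintype_fun_eq_card, Nat.card_eq_fintype_card]

section TaylorMatrix

variable {R : Type*} [CommRing R]

theorem sum_range_choose_mul_pow_mul_choose_mul_pow (u v : R) {r N : ℕ} (hr : r ≤ N) (s : ℕ) :
    ∑ t ∈ range (N + 1), (r.choose t * u ^ (r - t)) * (t.choose s * v ^ (t - s))
      = r.choose s * (u + v) ^ (r - s) := by
  calc ∑ t ∈ range (N + 1), (r.choose t * u ^ (r - t)) * (t.choose s * v ^ (t - s))
      = ∑ t ∈ range (r + 1), (r.choose t * u ^ (r - t)) * (t.choose s * v ^ (t - s)) := by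
        refine (sum_subset (range_subset_range.2 (by omega)) fun t _ ht => ?_).symm
        rw [Nat.choose_eq_zero_of_lt (by simpa using ht)]
        simp
    _ = ((X + C v + C u) ^ r).coeff s := by
        rw [add_pow, finsetSum_coeff]
        refine sum_congr rfl fun t _ => ?_
        rw [← C_pow, ← C_eq_natCast, coeff_mul_C, coeff_mul_C, coeff_X_add_C_pow]
        ring
    _ = r.choose s * (u + v) ^ (r - s) := by
        rw [add_assoc, ← C_add, coeff_X_add_C_pow, add_comm v u, mul_comm]

def taylorMatrix (n : ℕ) (u : R) : Matrix (Fin (n + 1)) (Fin (n + 1)) R :=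
  of fun r s => (r.1.choose s.1 : R) * u ^ (r.1 - s.1)

theorem taylorMatrix_mul (n : ℕ) (u v : R) :
    taylorMatrix n u * taylorMatrix n v = taylorMatrix n (u + v) := by
  ext r s
  simp only [mul_apply, taylorMatrix, of_apply]
  rw [Fin.sum_univ_eq_sum_range
    (fun t => (r.1.choose t * u ^ (r.1 - t)) * (t.choose s.1 * v ^ (t - s.1) : R))]
  exact sum_range_choose_mul_pow_mul_choose_mul_pow u v r.is_le s

theorem taylorMatrix_zero (n : ℕ) : taylorMatrix n (0 : R) = 1 := by
  ext r s
  rcases lt_trichotomy r s with h | rfl | h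
  · simp [taylorMatrix, one_apply_ne h.ne, Nat.choose_eq_zero_of_lt (Fin.lt_def.1 h)]
  · simp [taylorMatrix]
  · simp [taylorMatrix, one_apply_ne h.ne', Nat.sub_ne_zero_of_lt (Fin.lt_def.1 h)]

end TaylorMatrix

theorem mem_oscSub_iff {F : Type} [Field F] {n c : ℕ} {u : F} {x : Fin (n + 1) → F} :
    x ∈ oscSub F n u c ↔ ∀ s : Fin (n + 1), c ≤ s.1 → (taylorMatrix n (-u) *ᵥ x) s = 0 := by
  constructor
  · intro hx
    let W : Submodule F (Fin (n + 1) → F) := ⨅ (s : Fin (n + 1)) (_ : c ≤ s.1),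
      LinearMap.ker (LinearMap.proj s ∘ₗ (taylorMatrix n (-u)).mulVecLin)
    suffices hW : oscSub F n u c ≤ W by simpa [W] using hW hx
    refine Submodule.span_le.2 ?_
    rintro _ ⟨s', rfl⟩
    simp only [W, SetLike.mem_coe, Submodule.mem_iInf, LinearMap.mem_ker, LinearMap.comp_apply,
      LinearMap.proj_apply, mulVecLin_apply]
    intro s hs
    simp only [mulVec, dotProduct, taylorMatrix, of_apply]
    rw [Fin.sum_univ_eq_sum_range
      (fun t => (s.1.choose t * (-u) ^ (s.1 - t)) * (t.choose s'.1 * u ^ (t - s'.1) : F)),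
      sum_range_choose_mul_pow_mul_choose_mul_pow _ _ s.is_le, neg_add_cancel,
      zero_pow (by omega), mul_zero]
  · intro hx
    have hexp : x = ∑ s, (taylorMatrix n (-u) *ᵥ x) s • (taylorMatrix n u)ᵀ s := by
      calc x = taylorMatrix n u *ᵥ (taylorMatrix n (-u) *ᵥ x) := by
            rw [mulVec_mulVec, taylorMatrix_mul, add_neg_cancel, taylorMatrix_zero,
              one_mulVec]
        _ = _ := by simp only [mulVec_eq_sum, op_smul_eq_smul]
    rw [hexp]
    refine Submodule.sum_mem _ fun s _ => ?_
    by_cases hs : c ≤ s.1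
    · simp [hx s hs]
    · exact Submodule.smul_mem _ _ (Submodule.subset_span ⟨⟨s, by omega⟩, rfl⟩)

theorem mem_nucleus_iff {F : Type} [Field F] {n : ℕ} (hF : (n : Cardinal) ≤ Cardinal.mk F)
    {x : Fin (n + 1) → F} : x ∈ nucleus F n n ↔ ∀ t, (n.choose t.1 : F) * x t = 0 := by
  have hlast (u : F) : (taylorMatrix n (-u) *ᵥ x) (Fin.last n)
      = ∑ t, (n.choose t.1 : F) * x t * (-u) ^ (n - t.1) := by
    simp only [mulVec, dotProduct, taylorMatrix, of_apply, Fin.val_last]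
    exact sum_congr rfl fun t _ => by ring
  have hosc : (∀ u : F, ∀ s : Fin (n + 1), n ≤ s.1 → (taylorMatrix n (-u) *ᵥ x) s = 0)
      ↔ ∀ u : F, ∑ t, (n.choose t.1 : F) * x t * u ^ (n - t.1) = 0 := by
    refine ⟨fun h u => ?_, fun h u s hs => ?_⟩
    · have := h (-u) (Fin.last n) le_rfl
      rwa [hlast, neg_neg] at this
    · obtain rfl : s = Fin.last n := Fin.ext (by rw [Fin.val_last]; omega)
      exact (hlast u).trans (h (-u))
  have hinfty : (∀ i : Fin (n + 1), ¬ n + 1 ≤ i.1 + n → x i = 0) ↔ x 0 = 0 := by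
    refine ⟨fun h => h 0 (by simp), fun h i hi => ?_⟩
    obtain rfl : i = 0 := Fin.ext (by rw [Fin.val_zero]; omega)
    exact h
  simp only [nucleus, Submodule.mem_inf, Submodule.mem_iInf, mem_oscSub_iff, oscInfty,
    mem_span_single_one_iff, hosc, hinfty]
  constructor
  · rintro ⟨hsum, h0⟩
    exact (forall_sum_mul_pow_eq_zero_iff hF (by simp [h0])).1 hsum
  · intro h
    exact ⟨(forall_sum_mul_pow_eq_zero_iff hF (h 0)).2 h, by simpa using h 0⟩

theorem nucleus_eq_iInf_ker_proj {F : Type} [Field F] {n : ℕ}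
    (hF : (n : Cardinal) ≤ Cardinal.mk F) :
    nucleus F n n = ⨅ t ∈ {t : Fin (n + 1) | (n.choose t.1 : F) ≠ 0},
      LinearMap.ker (LinearMap.proj t : (Fin (n + 1) → F) →ₗ[F] F) := by
  ext x
  simp [mem_nucleus_iff hF, Submodule.mem_iInf, or_iff_not_imp_left]

theorem natCard_compl_setOf_choose_cast_ne_zero (F : Type*) [Field F] (p : ℕ) [CharP F p]
    (n : ℕ) :
    Nat.card ↥{t : Fin (n + 1) | (n.choose t.1 : F) ≠ 0}ᶜ
      = n + 1 - #{k ∈ range (n + 1) | ¬ p ∣ n.choose k} := by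
  classical
  simp_rw [ne_eq, CharP.cast_eq_zero_iff F p]
  rw [Nat.card_eq_fintype_card, Fintype.card_compl_set, Fintype.card_fin]
  congr 1
  simp only [Fintype.card_subtype, card_filter]
  exact Fin.sum_univ_eq_sum_range (fun k => if ¬ p ∣ n.choose k then 1 else 0) _

theorem timmermann_formula_general (F : Type) [Field F] (p : ℕ) (hp : p.Prime) [CharP F p]
    (n : ℕ) (hF : (n : Cardinal) ≤ Cardinal.mk F) :
    Module.finrank F (nucleus F n n)
      = n + 1 - ∏ σ ∈ Finset.range (n + 1), (digit p n σ + 1) := by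
  have := Fact.mk hp
  have hn : n < p ^ (n + 1) := (Nat.lt_pow_self hp.one_lt).trans (Nat.pow_lt_pow_succ hp.one_lt)
  rw [nucleus_eq_iInf_ker_proj hF, finrank_iInf_ker_proj,
    natCard_compl_setOf_choose_cast_ne_zero F p, card_filter_not_dvd_choose_eq_prod_digit hn]

/-- **Timmermann's formula**: over a field of characteristic `p > 0` with `#F ≥ n`,
the `(n−1)`-nucleus (intersection of all osculating hyperplanes, so `c = n`) of the
normal rational curve `V_1^n` has projective dimension `n − ∏_σ (n_σ + 1)`,
i.e. vector-space dimension `n + 1 − ∏_σ (n_σ + 1)`, where `n_σ` are the base-`p`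
digits of `n`. (Digits with index `σ > n` vanish, so the product over `σ < n+1` is
the full product.) -/
theorem timmermann_formula (F : Type) [Field F] (p : ℕ) (hp : p.Prime) [CharP F p]
    (n : ℕ) (hn : 2 ≤ n) (hF : (n : Cardinal) ≤ Cardinal.mk F) :
    Module.finrank F (nucleus F n n)
      = n + 1 - ∏ σ ∈ Finset.range (n + 1), (digit p n σ + 1) :=
  timmermann_formula_general F p hp n hF
end

section
/- Let F be a field of characteristic p > 0 with #F ≥ n and n ≥ 2. All nuclei of the normal rational curve V_1^n are empty if and only if n + 1 = n_J · p^J for some J ∈ ℕ and 1 ≤ n_J < p, i.e. n = ⟨n_J, p−1, …, p−1⟩ in base p. -/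
/-!
The nuclei decrease with `k`, so all of them vanish iff the `(n - 1)`-nucleus does. The
osculating spaces at a finite point `u` are spanned by columns of the Pascal matrix
`P(u) = (C(r, s) u ^ (r - s))`, and `P(-u) = P(u)⁻¹`; hence the osculating hyperplane at `u` is
`∑ C(n, r) (-u) ^ (n - r) v_r = 0`. A vector `v` of the `(n - 1)`-nucleus thus has `v_0 = 0` and
makes `∑ C(n, r) v_r X ^ (n - r)`, of degree `< n ≤ #F`, vanish on `F`; so `v_r = 0` whenever
`p ∤ C(n, r)`, while `e_j` lies in the nucleus whenever `p ∣ C(n, j)`. By Lucas's theorem,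
`p ∤ C(n, j)` for all `j` iff all base-`p` digits of `n` below the leading one are `p - 1`.
-/

namespace Nat

variable {p : ℕ}

theorem Prime.not_dvd_choose_of_lt (hp : p.Prime) {n k : ℕ} (hn : n < p) (hk : k ≤ n) :
    ¬ p ∣ n.choose k := fun h =>
  hn.not_ge <| hp.dvd_factorial.mp <|
    choose_mul_factorial_mul_factorial hk ▸ (h.mul_right _).mul_right _

theorem choose_mul_add_modEq [Fact p.Prime] {d : ℕ} (hd : d < p) (m k : ℕ) :
    (p * m + d).choose k ≡ d.choose (k % p) * m.choose (k / p) [MOD p] := by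
  have := Choose.choose_modEq_choose_mod_mul_choose_div_nat (p := p) (n := p * m + d) (k := k)
  rwa [mul_add_mod, mod_eq_of_lt hd, mul_add_div (Fact.out : p.Prime).pos,
    div_eq_of_lt hd, add_zero] at this

theorem Prime.not_dvd_choose_mul_pow_sub_one (hp : p.Prime) {a : ℕ} (ha : 0 < a) (hap : a < p) :
    ∀ J j, j ≤ a * p ^ J - 1 → ¬ p ∣ (a * p ^ J - 1).choose j := by
  have := Fact.mk hp
  intro J
  induction J with
  | zero => simpa using fun j => hp.not_dvd_choose_of_lt (by omega)
  | succ J ih =>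
    intro j hj hdvd
    set M := a * p ^ J - 1
    have hM : a * p ^ (J + 1) - 1 = p * M + (p - 1) := by
      have : p ≤ p * (a * p ^ J) := Nat.le_mul_of_pos_right p (mul_pos ha (pow_pos hp.pos J))
      rw [pow_succ, ← mul_assoc, mul_comm _ p, mul_sub_one]
      omega
    rw [hM] at hj hdvd
    have hp1 : p - 1 < p := by have := hp.pos; omega
    have hdvd' := (modEq_zero_iff_dvd.mpr hdvd).symm.trans (choose_mul_add_modEq hp1 M j)
    rcases (Prime.dvd_mul hp).mp (modEq_zero_iff_dvd.mp hdvd'.symm) with h | h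
    · exact hp.not_dvd_choose_of_lt hp1 (by have := mod_lt j hp.pos; omega) h
    · refine ih (j / p) ?_ h
      calc j / p ≤ (p * M + (p - 1)) / p := Nat.div_le_div_right hj
        _ = M := by rw [mul_add_div hp.pos, div_eq_of_lt hp1, add_zero]

theorem Prime.exists_mul_pow_of_forall_not_dvd_choose (hp : p.Prime) (n : ℕ)
    (h : ∀ j ≤ n, ¬ p ∣ n.choose j) : ∃ J a : ℕ, 1 ≤ a ∧ a < p ∧ n + 1 = a * p ^ J := by
  have := Fact.mk hp
  induction n using Nat.strong_induction_on with
  | _ n ih =>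
  obtain ⟨m, d, hd, rfl⟩ : ∃ m d, d < p ∧ n = p * m + d :=
    ⟨n / p, n % p, mod_lt n hp.pos, (div_add_mod n p).symm⟩
  rcases m.eq_zero_or_pos with rfl | hm
  · rcases (show d + 1 ≤ p by omega).lt_or_eq with hlt | heq
    · exact ⟨0, d + 1, by omega, hlt, by simp⟩
    · exact ⟨1, 1, le_rfl, hp.one_lt, by simp [heq]⟩
  have hpm : p ≤ p * m := Nat.le_mul_of_pos_right p hm
  have hdp : d = p - 1 := by
    by_contra hne
    have hd1 : d + 1 < p := by omega
    have := choose_mul_add_modEq hd m (d + 1)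
    rw [mod_eq_of_lt hd1, choose_succ_self, zero_mul] at this
    exact h (d + 1) (by omega) (modEq_zero_iff_dvd.mp this)
  have hm_choose : ∀ i ≤ m, ¬ p ∣ m.choose i := fun i hi hdvd => by
    have := choose_mul_add_modEq hd m (p * i)
    rw [mul_mod_right, mul_div_cancel_left₀ i hp.ne_zero, choose_zero_right, one_mul] at this
    exact h (p * i) (le_add_right_of_le (Nat.mul_le_mul_left p hi))
      (modEq_zero_iff_dvd.mp (this.trans (modEq_zero_iff_dvd.mpr hdvd)))
  obtain ⟨J, a, ha, hap, hJ⟩ := ih m (by have := hp.two_le; nlinarith) hm_choose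
  refine ⟨J + 1, a, ha, hap, ?_⟩
  rw [pow_succ, ← mul_assoc, ← hJ]
  have := hp.pos
  subst hdp
  ring_nf
  omega

theorem Prime.forall_not_dvd_choose_iff (hp : p.Prime) (n : ℕ) :
    (∀ j ≤ n, ¬ p ∣ n.choose j) ↔ ∃ J a : ℕ, 1 ≤ a ∧ a < p ∧ n + 1 = a * p ^ J := by
  refine ⟨hp.exists_mul_pow_of_forall_not_dvd_choose n, ?_⟩
  rintro ⟨J, a, ha, hap, hn⟩
  obtain rfl : n = a * p ^ J - 1 := by omega
  exact hp.not_dvd_choose_mul_pow_sub_one ha hap J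

end Nat

open Finset Polynomial Matrix

theorem sum_choose_mul_pow_mul_choose_mul_pow {R : Type*} [CommSemiring R] (a b : ℕ) (x y : R) :
    ∑ s ∈ range (a + 1), (a.choose s : R) * x ^ (a - s) * ((s.choose b : R) * y ^ (s - b)) =
      (a.choose b : R) * (x + y) ^ (a - b) := by
  have hsplit : (X + C (x + y)) ^ a =
      ∑ s ∈ range (a + 1), (X + C y) ^ s * C (x ^ (a - s) * a.choose s) := by
    rw [C_add, add_comm (C x), ← add_assoc, add_pow]
    simp only [C_mul, C_pow, map_natCast, mul_assoc]
  have := congrArg (coeff · b) hsplit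
  simp only [coeff_X_add_C_pow, finsetSum_coeff, coeff_mul_C] at this
  rw [mul_comm, this]
  exact sum_congr rfl fun s _ => by ring

section

variable {F : Type} [Field F] {n : ℕ}

/-- Row `r` lists the coefficients of `(X + u) ^ r`. -/
def pascal (n : ℕ) (u : F) : Matrix (Fin (n + 1)) (Fin (n + 1)) F :=
  Matrix.of fun r s => (r.1.choose s.1 : F) * u ^ (r.1 - s.1)

theorem pascal_mul_pascal (x y : F) : pascal n x * pascal n y = pascal n (x + y) := by
  ext r s
  simp only [pascal, Matrix.mul_apply, Matrix.of_apply]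
  rw [← sum_choose_mul_pow_mul_choose_mul_pow, Fin.sum_univ_eq_sum_range
    (fun t => (r.1.choose t : F) * x ^ (r.1 - t) * ((t.choose s.1 : F) * y ^ (t - s.1)))]
  refine (sum_subset (range_subset_range.mpr (by omega)) fun t _ ht => ?_).symm
  rw [Nat.choose_eq_zero_of_lt (by simpa using ht), Nat.cast_zero, zero_mul, zero_mul]

theorem pascal_zero : pascal n (0 : F) = 1 := by
  ext r s
  rcases lt_trichotomy r s with h | rfl | h
  · simp [pascal, Nat.choose_eq_zero_of_lt (show r.1 < s.1 from h), h.ne]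
  · simp [pascal]
  · simp [pascal, h.ne', Nat.sub_ne_zero_of_lt (show s.1 < r.1 from h)]

theorem pascal_neg_mul_pascal (u : F) : pascal n (-u) * pascal n u = 1 := by
  rw [pascal_mul_pascal, neg_add_cancel, pascal_zero]

theorem pascal_mul_pascal_neg (u : F) : pascal n u * pascal n (-u) = 1 := by
  rw [pascal_mul_pascal, add_neg_cancel, pascal_zero]

theorem mem_oscSub_self_iff {u : F} {v : Fin (n + 1) → F} :
    v ∈ oscSub F n u n ↔ (pascal n (-u) *ᵥ v) (Fin.last n) = 0 := by
  let φ := (LinearMap.proj (Fin.last n)).comp (pascal n (-u)).mulVecLin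
  constructor
  · refine fun hv => (Submodule.span_le (p := LinearMap.ker φ)).mpr ?_ hv
    rintro _ ⟨s, rfl⟩
    change (pascal n (-u) *ᵥ (pascal n u).col s.castSucc) (Fin.last n) = 0
    rw [← mulVec_single_one, mulVec_mulVec, pascal_neg_mul_pascal, one_mulVec,
      Pi.single_eq_of_ne (Fin.castSucc_lt_last s).ne']
  · intro hv
    have hv_eq : v = pascal n u *ᵥ (pascal n (-u) *ᵥ v) := by
      rw [mulVec_mulVec, pascal_mul_pascal_neg, one_mulVec]
    rw [hv_eq, mulVec_eq_sum, Fin.sum_univ_castSucc, hv, MulOpposite.op_zero, zero_smul, add_zero]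
    exact Submodule.sum_mem _ fun s _ => by
      rw [op_smul_eq_smul]
      exact Submodule.smul_mem _ _ (Submodule.subset_span ⟨s, rfl⟩)

theorem mem_oscInfty_iff {c : ℕ} {v : Fin (n + 1) → F} :
    v ∈ oscInfty F n c ↔ ∀ r : Fin (n + 1), r.1 + c ≤ n → v r = 0 := by
  constructor
  · intro hv r hr
    induction hv using Submodule.span_induction with
    | mem x hx =>
      obtain ⟨i, hi, rfl⟩ := hx
      exact Pi.single_eq_of_ne (fun h => by rw [h] at hr; omega) 1
    | zero => rfl
    | add x y _ _ hx hy => simp [hx, hy]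
    | smul a x _ hx => simp [hx]
  · intro hv
    rw [← Finset.univ_sum_single v]
    refine Submodule.sum_mem _ fun r _ => ?_
    by_cases hr : r.1 + c ≤ n
    · rw [hv r hr, Pi.single_zero]
      exact Submodule.zero_mem _
    · rw [← mul_one (v r), ← smul_eq_mul, Pi.single_smul]
      exact Submodule.smul_mem _ _ (Submodule.subset_span ⟨r, by omega, rfl⟩)

theorem nucleus_mono : Monotone (nucleus F n) := fun c c' h =>
  inf_le_inf
    (iInf_mono fun _ => Submodule.span_mono <| Set.range_subset_iff.mpr fun s =>
      ⟨Fin.castLE h s, rfl⟩)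
    (Submodule.span_mono fun _ ⟨i, hi, hv⟩ => ⟨i, by omega, hv⟩)

theorem mem_nucleus_self_iff {v : Fin (n + 1) → F} :
    v ∈ nucleus F n n ↔
      v 0 = 0 ∧ ∀ t : F, ∑ r : Fin (n + 1), (n.choose r.1 : F) * v r * t ^ (n - r) = 0 := by
  have hrow (t : F) : (pascal n t *ᵥ v) (Fin.last n) =
      ∑ r : Fin (n + 1), (n.choose r.1 : F) * v r * t ^ (n - r) := by
    simp only [mulVec, dotProduct]
    exact Finset.sum_congr rfl fun r _ => by rw [pascal, of_apply, Fin.val_last]; ring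
  simp only [nucleus, Submodule.mem_inf, Submodule.mem_iInf, mem_oscSub_self_iff, hrow,
    mem_oscInfty_iff]
  refine and_comm.trans (and_congr ⟨fun h => h 0 (by simp), fun h r hr => ?_⟩
    ⟨fun h t => by simpa using h (-t), fun h u => h _⟩)
  rwa [show r = 0 from Fin.ext (by simp only [Fin.val_zero]; omega)]

theorem eq_zero_of_forall_sum_mul_pow_sub_eq_zero (hF : (n : Cardinal) ≤ Cardinal.mk F)
    {a : Fin (n + 1) → F} (h0 : a 0 = 0) (h : ∀ t : F, ∑ r : Fin (n + 1), a r * t ^ (n - r) = 0) :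
    a = 0 := by
  set Q : F[X] := ∑ r : Fin (n + 1), C (a r) * X ^ (n - r)
  have hcoeff (r : Fin (n + 1)) : Q.coeff (n - r) = a r := by
    rw [finsetSum_coeff, Finset.sum_eq_single r (fun b _ hb => ?_) (by simp)]
    · simp
    · rw [coeff_C_mul_X_pow, if_neg (fun h => hb (Fin.ext (by omega)))]
  funext r
  rcases eq_or_ne r 0 with rfl | hr
  · exact h0
  have hn : 0 < n := by have := Fin.pos_iff_ne_zero.mpr hr; omega
  have hdeg : Q.natDegree < n := by
    refine (natDegree_sum_le_of_forall_le _ _ (n := n - 1) fun s _ => ?_).trans_lt (by omega)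
    rcases eq_or_ne s 0 with rfl | hs
    · simp [h0]
    · exact (natDegree_C_mul_X_pow_le _ _).trans (by have := Fin.pos_iff_ne_zero.mpr hs; omega)
  have hQ : Q = 0 := eq_zero_of_forall_eval_zero_of_natDegree_lt_card Q
    (fun t => by simpa [Q, eval_finsetSum] using h t)
    ((Nat.cast_lt.mpr hdeg).trans_le hF)
  rw [← hcoeff r, hQ, coeff_zero, Pi.zero_apply]

theorem single_mem_nucleus_self {j : Fin (n + 1)} (hj : j ≠ 0) (hnj : (n.choose j.1 : F) = 0) :
    Pi.single j 1 ∈ nucleus F n n := by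
  refine mem_nucleus_self_iff.mpr ⟨Pi.single_eq_of_ne hj.symm _, fun t => ?_⟩
  rw [Finset.sum_eq_single j (fun r _ hr => by simp [Pi.single_eq_of_ne hr]) (by simp), hnj,
    zero_mul, zero_mul]

theorem nucleus_self_eq_bot_iff (hF : (n : Cardinal) ≤ Cardinal.mk F) :
    nucleus F n n = ⊥ ↔ ∀ j : Fin (n + 1), (n.choose j.1 : F) ≠ 0 := by
  constructor
  · intro h j hnj
    have hj : j ≠ 0 := by rintro rfl; simp at hnj
    have := h ▸ single_mem_nucleus_self hj hnj
    simpa using congrFun ((Submodule.mem_bot F).mp this) j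
  · refine fun h => eq_bot_iff.mpr fun v hv => (Submodule.mem_bot F).mpr ?_
    obtain ⟨h0, hsum⟩ := mem_nucleus_self_iff.mp hv
    have := eq_zero_of_forall_sum_mul_pow_sub_eq_zero hF (a := fun r => (n.choose r.1 : F) * v r)
      (by simp [h0]) hsum
    funext r
    exact (mul_eq_zero.mp (congrFun this r)).resolve_left (h r)

end

theorem all_nuclei_empty_iff_general (F : Type) [Field F] (p : ℕ) (hp : p.Prime) [CharP F p]
    (n : ℕ) (hF : (n : Cardinal) ≤ Cardinal.mk F) :
    (∀ c ≤ n, nucleus F n c = ⊥) ↔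
      ∃ J nJ : ℕ, 1 ≤ nJ ∧ nJ < p ∧ n + 1 = nJ * p ^ J := by
  calc (∀ c ≤ n, nucleus F n c = ⊥) ↔ nucleus F n n = ⊥ :=
        ⟨fun h => h n le_rfl, fun h c hc => eq_bot_iff.mpr (h ▸ nucleus_mono hc)⟩
    _ ↔ ∀ j : Fin (n + 1), (n.choose j.1 : F) ≠ 0 := nucleus_self_eq_bot_iff hF
    _ ↔ ∀ j ≤ n, ¬ p ∣ n.choose j := by
        simp only [ne_eq, CharP.cast_eq_zero_iff F p, Fin.forall_iff, Nat.lt_succ_iff]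
    _ ↔ ∃ J nJ : ℕ, 1 ≤ nJ ∧ nJ < p ∧ n + 1 = nJ * p ^ J := hp.forall_not_dvd_choose_iff n

/-- Over a field of characteristic `p > 0` with `#F ≥ n` and `n ≥ 2`, all nuclei of the
normal rational curve `V_1^n` are empty (zero) if and only if `n + 1 = n_J · p^J` for
some `J ∈ ℕ` and `1 ≤ n_J < p`, i.e. `n = ⟨n_J, p−1, …, p−1⟩` in base `p`. -/
theorem all_nuclei_empty_iff (F : Type) [Field F] (p : ℕ) (hp : p.Prime) [CharP F p]
    (n : ℕ) (hn : 2 ≤ n) (hF : (n : Cardinal) ≤ Cardinal.mk F) :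
    (∀ c ≤ n, nucleus F n c = ⊥) ↔
      ∃ J nJ : ℕ, 1 ≤ nJ ∧ nJ < p ∧ n + 1 = nJ * p ^ J :=
  all_nuclei_empty_iff_general F p hp n hF
end
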